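/- arXiv:2407.14091 — 7 statements merged into one kernel-verified Lean document; each statement's English description precedes it below -/
import Mathlib

section
/- For integers n ≥ 2k+1 and k > d ≥ 1, ((k-d)/(n-k)) · C(n-k, k) ≥ C(n-k-d-1, k-d-1), with equality only when n = 2k+1. -/
open Nat

lemma dfpos {n k : ℕ} (h : k ≤ n) : 0 < Nat.descFactorial n k :=
  Nat.pos_of_ne_zero fun h0 => absurd (Nat.descFactorial_eq_zero_iff_lt.1 h0) (by omega)

lemma core_le (m k : ℕ) (hk : k + 1 ≤ m) :
    ∀ d, d ≤ k → m * Nat.descFactorial k d ≤ (m - d) * Nat.descFactorial m d := by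
  intro d
  induction d with
  | zero => simp
  | succ d ih =>
    intro hdk
    have ih' := ih (le_of_lt hdk)
    rw [Nat.descFactorial_succ, Nat.descFactorial_succ]
    calc m * ((k - d) * Nat.descFactorial k d)
        = (k - d) * (m * Nat.descFactorial k d) := by ring
      _ ≤ (k - d) * ((m - d) * Nat.descFactorial m d) := Nat.mul_le_mul_left _ ih'
      _ ≤ (m - (d+1)) * ((m - d) * Nat.descFactorial m d) := by
          apply Nat.mul_le_mul_right; omega
      _ = (m - (d+1)) * ((m - d) * Nat.descFactorial m d) := rfl

lemma core_lt (m k d : ℕ) (hk : k + 2 ≤ m) (hd1 : 1 ≤ d) (hdk : d ≤ k) :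
    m * Nat.descFactorial k d < (m - d) * Nat.descFactorial m d := by
  obtain ⟨d', rfl⟩ : ∃ d', d = d' + 1 := ⟨d - 1, by omega⟩
  have ih := core_le m k (by omega) d' (by omega)
  rw [Nat.descFactorial_succ, Nat.descFactorial_succ]
  have hpos : 0 < (m - d') * Nat.descFactorial m d' :=
    Nat.mul_pos (by omega) (dfpos (by omega))
  calc m * ((k - d') * Nat.descFactorial k d')
      = (k - d') * (m * Nat.descFactorial k d') := by ring
    _ ≤ (k - d') * ((m - d') * Nat.descFactorial m d') := Nat.mul_le_mul_left _ ih
    _ < (m - (d'+1)) * ((m - d') * Nat.descFactorial m d') :=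
        Nat.mul_lt_mul_of_lt_of_le (by omega) (le_refl _) hpos

lemma key_eq (m k d : ℕ) (hk : k + 1 ≤ m) (hdk : d < k) :
    (m * Nat.choose (m - d - 1) (k - d - 1)) * (Nat.descFactorial k (d+1)) *
      ((k - d - 1)! * (m - k)!) = (Nat.descFactorial k (d+1) * m) * (m - d - 1)! ∧
    ((k - d) * Nat.choose m k) * ((k - d - 1)! * (m - k)! * Nat.descFactorial k (d+1)) =
      ((k - d) * Nat.descFactorial m (d+1)) * (m - d - 1)! := by
  constructor
  · have h1 : k - d - 1 ≤ m - d - 1 := by omega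
    have h2 := Nat.choose_mul_factorial_mul_factorial h1
    have h3 : m - d - 1 - (k - d - 1) = m - k := by omega
    rw [h3] at h2
    calc (m * Nat.choose (m - d - 1) (k - d - 1)) * Nat.descFactorial k (d+1) *
          ((k - d - 1)! * (m - k)!)
        = (Nat.descFactorial k (d+1) * m) *
            (Nat.choose (m - d - 1) (k - d - 1) * (k - d - 1)! * (m - k)!) := by ring
      _ = (Nat.descFactorial k (d+1) * m) * (m - d - 1)! := by rw [h2]
  · have h2 := Nat.choose_mul_factorial_mul_factorial (show k ≤ m by omega)
    have h4 : (k - (d+1))! * Nat.descFactorial k (d+1) = k ! :=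
      Nat.factorial_mul_descFactorial (by omega)
    have h5 : (m - (d+1))! * Nat.descFactorial m (d+1) = m ! :=
      Nat.factorial_mul_descFactorial (by omega)
    have hkd : k - (d+1) = k - d - 1 := by omega
    have hmd : m - (d+1) = m - d - 1 := by omega
    rw [hkd] at h4; rw [hmd] at h5
    calc ((k - d) * Nat.choose m k) * ((k - d - 1)! * (m - k)! * Nat.descFactorial k (d+1))
        = (k - d) * (Nat.choose m k * k ! * (m-k)!) := by rw [← h4]; ring
      _ = (k - d) * m ! := by rw [h2]
      _ = ((k - d) * Nat.descFactorial m (d+1)) * (m - d - 1)! := by rw [← h5]; ring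

lemma step_le (m k d : ℕ) (hk : k + 1 ≤ m) (hdk : d < k) :
    Nat.descFactorial k (d+1) * m ≤ (k - d) * Nat.descFactorial m (d+1) := by
  rw [Nat.descFactorial_succ, Nat.descFactorial_succ]
  have := core_le m k hk d (by omega)
  calc (k - d) * Nat.descFactorial k d * m = (k - d) * (m * Nat.descFactorial k d) := by ring
    _ ≤ (k - d) * ((m - d) * Nat.descFactorial m d) := Nat.mul_le_mul_left _ this
    _ = (k - d) * ((m - d) * Nat.descFactorial m d) := rfl

lemma step_lt (m k d : ℕ) (hk : k + 2 ≤ m) (hd1 : 1 ≤ d) (hdk : d < k) :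
    Nat.descFactorial k (d+1) * m < (k - d) * Nat.descFactorial m (d+1) := by
  rw [Nat.descFactorial_succ, Nat.descFactorial_succ]
  have := core_lt m k d hk hd1 (by omega)
  calc (k - d) * Nat.descFactorial k d * m = (k - d) * (m * Nat.descFactorial k d) := by ring
    _ < (k - d) * ((m - d) * Nat.descFactorial m d) :=
        Nat.mul_lt_mul_of_pos_left this (by omega)

lemma nat_le (m k d : ℕ) (hk : k + 1 ≤ m) (hdk : d < k) :
    m * Nat.choose (m - d - 1) (k - d - 1) ≤ (k - d) * Nat.choose m k := by
  obtain ⟨e1, e2⟩ := key_eq m k d hk hdk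
  have hpos : 0 < (k - d - 1)! * (m - k)! * Nat.descFactorial k (d+1) :=
    Nat.mul_pos (Nat.mul_pos (Nat.factorial_pos _) (Nat.factorial_pos _))
      (dfpos (by omega))
  apply Nat.le_of_mul_le_mul_right _ hpos
  have e1' : m * Nat.choose (m - d - 1) (k - d - 1) * ((k - d - 1)! * (m - k)! *
      Nat.descFactorial k (d+1)) = (Nat.descFactorial k (d+1) * m) * (m - d - 1)! := by
    rw [← e1]; ring
  rw [e1', e2]
  exact Nat.mul_le_mul_right _ (step_le m k d hk hdk)

lemma nat_lt (m k d : ℕ) (hk : k + 2 ≤ m) (hd1 : 1 ≤ d) (hdk : d < k) :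
    m * Nat.choose (m - d - 1) (k - d - 1) < (k - d) * Nat.choose m k := by
  obtain ⟨e1, e2⟩ := key_eq m k d (by omega) hdk
  have hpos : 0 < (k - d - 1)! * (m - k)! * Nat.descFactorial k (d+1) :=
    Nat.mul_pos (Nat.mul_pos (Nat.factorial_pos _) (Nat.factorial_pos _))
      (dfpos (by omega))
  apply Nat.lt_of_mul_lt_mul_right (a := (k - d - 1)! * (m - k)! * Nat.descFactorial k (d+1))
  have e1' : m * Nat.choose (m - d - 1) (k - d - 1) * ((k - d - 1)! * (m - k)! *
      Nat.descFactorial k (d+1)) = (Nat.descFactorial k (d+1) * m) * (m - d - 1)! := by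
    rw [← e1]; ring
  rw [e1', e2]
  exact Nat.mul_lt_mul_of_pos_right (step_lt m k d hk hd1 hdk) (Nat.factorial_pos _)

theorem stmt_0 (n k d : ℕ) (hd : 1 ≤ d) (hdk : d < k) (hn : 2 * k + 1 ≤ n) :
    (((k : ℝ) - d) / ((n : ℝ) - k)) * (Nat.choose (n - k) k : ℝ) ≥
      (Nat.choose (n - k - d - 1) (k - d - 1) : ℝ) ∧
    ((((k : ℝ) - d) / ((n : ℝ) - k)) * (Nat.choose (n - k) k : ℝ) =
      (Nat.choose (n - k - d - 1) (k - d - 1) : ℝ) → n = 2 * k + 1) := by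
  set m := n - k with hm
  have hkm : k + 1 ≤ m := by omega
  have hkn : (k : ℝ) ≤ n := by exact_mod_cast (by omega : k ≤ n)
  have hcast1 : (n : ℝ) - k = (m : ℝ) := by
    rw [hm]; push_cast [Nat.cast_sub (show k ≤ n by omega)]; ring
  have hcast2 : (k : ℝ) - d = ((k - d : ℕ) : ℝ) := by
    push_cast [Nat.cast_sub (le_of_lt hdk)]; ring
  have hmpos : (0 : ℝ) < m := by exact_mod_cast (by omega : 0 < m)
  rw [hcast1, hcast2]
  have hle := nat_le m k d hkm hdk
  constructor
  · rw [ge_iff_le, div_mul_eq_mul_div, le_div_iff₀ hmpos]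
    exact_mod_cast Nat.mul_comm m _ ▸ hle
  · intro heq
    by_contra hne
    have hk2 : k + 2 ≤ m := by omega
    have hlt := nat_lt m k d hk2 hd hdk
    rw [div_mul_eq_mul_div, div_eq_iff (ne_of_gt hmpos)] at heq
    have hnat : (k - d) * Nat.choose m k = Nat.choose (m - d - 1) (k - d - 1) * m := by
      exact_mod_cast heq
    rw [Nat.mul_comm (Nat.choose (m - d - 1) (k - d - 1)) m] at hnat
    omega
end

section
/- For integers n ≥ 2k+1 and k > d ≥ 1, (k-d) · C(n-k, k) ≥ (n-k) · C(n-k-d-1, k-d-1). -/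
lemma stmt_1_aux (m k : ℕ) (hk : k + 1 ≤ m) :
    ∀ i, i ≤ k → m * Nat.choose (m - i) (k - i) ≤ (m - i) * Nat.choose m k := by
  intro i
  induction i with
  | zero => simp
  | succ i ih =>
    intro hik
    have h1 : i ≤ k := le_of_lt (Nat.lt_of_succ_le hik)
    have IH := ih h1
    obtain ⟨A, hA⟩ : ∃ A, m - i = A + 1 := ⟨m - i - 1, by omega⟩
    obtain ⟨B, hB⟩ : ∃ B, k - i = B + 1 := ⟨k - i - 1, by omega⟩
    have key : (A + 1) * Nat.choose A B = Nat.choose (A + 1) (B + 1) * (B + 1) :=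
      Nat.add_one_mul_choose_eq A B
    have hmi : m - (i + 1) = A := by omega
    have hki : k - (i + 1) = B := by omega
    rw [hmi, hki]
    have hA1 : 0 < A + 1 := Nat.succ_pos A
    have step : (A + 1) * (m * Nat.choose A B) ≤ (A + 1) * (A * Nat.choose m k) := by
      calc (A + 1) * (m * Nat.choose A B) = m * ((A + 1) * Nat.choose A B) := by ring
        _ = m * (Nat.choose (A + 1) (B + 1) * (B + 1)) := by rw [key]
        _ ≤ m * (Nat.choose (A + 1) (B + 1) * A) := by
            apply Nat.mul_le_mul_left
            apply Nat.mul_le_mul_left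
            omega
        _ = A * (m * Nat.choose (A + 1) (B + 1)) := by ring
        _ = A * (m * Nat.choose (m - i) (k - i)) := by rw [hA, hB]
        _ ≤ A * ((m - i) * Nat.choose m k) := Nat.mul_le_mul_left _ IH
        _ = (A + 1) * (A * Nat.choose m k) := by rw [hA]; ring
    exact Nat.le_of_mul_le_mul_left step hA1

theorem stmt_1 (n k d : ℕ) (hd : 1 ≤ d) (hdk : d < k) (hn : 2 * k + 1 ≤ n) :
    (k - d) * Nat.choose (n - k) k ≥ (n - k) * Nat.choose (n - k - d - 1) (k - d - 1) := by
  set m := n - k with hm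
  have hk : k + 1 ≤ m := by omega
  have haux := stmt_1_aux m k hk d (le_of_lt hdk)
  obtain ⟨A, hA⟩ : ∃ A, m - d = A + 1 := ⟨m - d - 1, by omega⟩
  obtain ⟨B, hB⟩ : ∃ B, k - d = B + 1 := ⟨k - d - 1, by omega⟩
  have key : (A + 1) * Nat.choose A B = Nat.choose (A + 1) (B + 1) * (B + 1) :=
    Nat.add_one_mul_choose_eq A B
  have h1 : m - d - 1 = A := by omega
  have h2 : k - d - 1 = B := by omega
  have hgoal : m - d - 1 = n - k - d - 1 := by omega
  rw [ge_iff_le, ← hgoal, h1, h2, hB]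
  -- goal: m * choose A B ≤ (B+1) * choose m k
  have step : (A + 1) * (m * Nat.choose A B) ≤ (A + 1) * ((B + 1) * Nat.choose m k) := by
    calc (A + 1) * (m * Nat.choose A B) = m * ((A + 1) * Nat.choose A B) := by ring
      _ = m * (Nat.choose (A + 1) (B + 1) * (B + 1)) := by rw [key]
      _ = (B + 1) * (m * Nat.choose (A + 1) (B + 1)) := by ring
      _ = (B + 1) * (m * Nat.choose (m - d) (k - d)) := by rw [hA, hB]
      _ ≤ (B + 1) * ((m - d) * Nat.choose m k) :=
          Nat.mul_le_mul_left _ haux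
      _ = (A + 1) * ((B + 1) * Nat.choose m k) := by rw [hA]; ring
  exact Nat.le_of_mul_le_mul_left step (Nat.succ_pos A)
end

section
/- For integers 0 ≤ j ≤ d < k with 2k ≤ n, the alternating sum ∑_{i=j}^{d} (-1)^i C(k-i, d-i)^2 · C(k-j, k-i) · C(n-i-j, k-i) equals (-1)^j · C(k-j, d-j) · C(n-d-j, d-j) · C(n-d-j, k-d). -/
/-!
Put `K = k - j`, `D = d - j`, `N = n - 2j` and `i = j + m`. Two applications of
`C(a, b) C(b, c) = C(a, c) C(a - c, b - c)` factor the summand as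
`(-1)^j C(K, D) C(N - D, K - D)` times `(-1)^m C(D, m) C(N - m, D - m)`.
After reflecting `m ↦ D - m`, the remaining alternating sum is the `D`-th forward difference of
`x ↦ C(x, N - D)` at `N - D`, which is `C(N - D, N - 2D) = C(N - D, D)`.
-/

open Finset Nat

theorem alternating_sum_choose_mul_choose_add (D r y : ℕ) :
    ∑ m ∈ range (D + 1), (-1 : ℤ) ^ (D - m) * D.choose m * (y + m).choose (D + r) =
      y.choose r := by
  have h := congr_fun (fwdDiff_iter_choose r D) y
  rw [fwdDiff_iter_eq_sum_shift] at h
  simpa only [smul_eq_mul, nsmul_eq_mul, mul_one] using h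

theorem alternating_sum_choose_mul_choose_sub {D M N : ℕ} (hDM : D ≤ M) (hMN : M + D ≤ N) :
    ∑ m ∈ range (D + 1), (-1 : ℤ) ^ m * D.choose m * (N - m).choose (M - m) =
      (N - D).choose M := by
  rw [← sum_range_reflect, choose_symm_of_eq_add (by omega : N - D = M + (N - M - D)),
    ← alternating_sum_choose_mul_choose_add D (N - M - D) (N - D)]
  refine sum_congr rfl fun m hm => ?_
  have hmD : m ≤ D := Nat.lt_succ_iff.mp (mem_range.mp hm)
  rw [add_tsub_cancel_right, choose_symm hmD,
    choose_symm_of_eq_add (by omega : N - (D - m) = M - (D - m) + (N - M))]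
  congr 3 <;> omega

theorem choose_sub_sq_mul_choose_mul_choose_sub {K D N m : ℕ} (hmD : m ≤ D) (hDK : D ≤ K) :
    (K - m).choose (D - m) ^ 2 * K.choose m * (N - m).choose (K - m) =
      K.choose D * (N - D).choose (K - D) * (D.choose m * (N - m).choose (D - m)) := by
  have hK := Nat.choose_mul (n := K) hmD
  have hN := Nat.choose_mul (n := N - m) (Nat.sub_le_sub_right hDK m)
  rw [tsub_tsub_tsub_cancel_right hmD, tsub_tsub_tsub_cancel_right hmD] at hN
  calc _ = (K.choose m * (K - m).choose (D - m)) *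
        ((N - m).choose (K - m) * (K - m).choose (D - m)) := by ring
    _ = _ := by rw [← hK, hN]; ring

theorem alternating_sum_choose_sub_sq_mul_choose_mul_choose_sub {K D N : ℕ} (hDK : D ≤ K)
    (hDN : 2 * D ≤ N) :
    ∑ m ∈ range (D + 1), (-1 : ℤ) ^ m * (K - m).choose (D - m) ^ 2 * K.choose (K - m) *
        (N - m).choose (K - m) =
      K.choose D * (N - D).choose D * (N - D).choose (K - D) := by
  have hterm : ∀ m ∈ range (D + 1),
      (-1 : ℤ) ^ m * (K - m).choose (D - m) ^ 2 * K.choose (K - m) * (N - m).choose (K - m) =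
        K.choose D * (N - D).choose (K - D) * ((-1) ^ m * D.choose m * (N - m).choose (D - m)) := by
    intro m hm
    have hmD : m ≤ D := Nat.lt_succ_iff.mp (mem_range.mp hm)
    have h : ((_ : ℕ) : ℤ) = _ :=
      congrArg Nat.cast (choose_sub_sq_mul_choose_mul_choose_sub (N := N) hmD hDK)
    push_cast at h
    rw [choose_symm (hmD.trans hDK)]
    linear_combination (-1 : ℤ) ^ m * h
  rw [sum_congr rfl hterm, ← mul_sum, alternating_sum_choose_mul_choose_sub le_rfl (by omega)]
  ring

theorem stmt_2 (n k d j : ℕ) (hjd : j ≤ d) (hdk : d < k) (hkn : 2 * k ≤ n) :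
    ∑ i ∈ Finset.Icc j d,
        ((-1 : ℤ) ^ i * (Nat.choose (k - i) (d - i) : ℤ) ^ 2 *
          (Nat.choose (k - j) (k - i) : ℤ) * (Nat.choose (n - i - j) (k - i) : ℤ)) =
      (-1 : ℤ) ^ j * (Nat.choose (k - j) (d - j) : ℤ) *
        (Nat.choose (n - d - j) (d - j) : ℤ) * (Nat.choose (n - d - j) (k - d) : ℤ) := by
  have key := congrArg ((-1 : ℤ) ^ j * ·)
    (alternating_sum_choose_sub_sq_mul_choose_mul_choose_sub
      (K := k - j) (D := d - j) (N := n - j - j) (by omega) (by omega))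
  rw [← Ico_add_one_right_eq_Icc, sum_Ico_eq_sum_range, show d + 1 - j = d - j + 1 by omega]
  convert key using 1
  · rw [mul_sum]
    refine sum_congr rfl fun m _ => ?_
    rw [show k - (j + m) = k - j - m by omega, show d - (j + m) = d - j - m by omega,
      show n - (j + m) - j = n - j - j - m by omega, pow_add]
    ring
  · rw [show n - j - j - (d - j) = n - d - j by omega, show k - j - (d - j) = k - d by omega]
    ring
end

section
/- For integers 0 ≤ j ≤ d with n ≥ 2d, ∑_{i=j}^{d} (-1)^{i-j} · C(d-j, i-j) · C(n-i-j, d-i) = C(n-d-j, n-2d). -/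
open Polynomial Finset

lemma key (m D c : ℕ) (hmD : m ≤ D) :
    ∑ k ∈ Finset.range (D + 1),
        (-1 : ℤ) ^ k * (Nat.choose m k : ℤ) * (Nat.choose (D + c + m - k) (D - k) : ℤ) =
      (Nat.choose (D + c) D : ℤ) := by
  have hpoly : ((1 + X : ℤ[X]) ^ (D + c)) =
      ∑ k ∈ Finset.range (m + 1),
        (C ((-1 : ℤ) ^ k * (Nat.choose m k : ℤ))) * X ^ k * (1 + X) ^ (D + c + m - k) := by
    have h1 : ((-X) + (1 + X) : ℤ[X]) ^ m =
        ∑ k ∈ Finset.range (m + 1), (-X) ^ k * (1 + X) ^ (m - k) * (Nat.choose m k : ℤ[X]) :=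
      add_pow _ _ _
    have h2 : ((-X) + (1 + X) : ℤ[X]) = 1 := by ring
    calc ((1 + X : ℤ[X]) ^ (D + c))
        = (((-X) + (1 + X)) ^ m) * (1 + X) ^ (D + c) := by rw [h2]; ring
      _ = ∑ k ∈ Finset.range (m + 1),
            (C ((-1 : ℤ) ^ k * (Nat.choose m k : ℤ))) * X ^ k * (1 + X) ^ (D + c + m - k) := by
          rw [h1, Finset.sum_mul]
          refine Finset.sum_congr rfl fun k hk => ?_
          have hk' : k ≤ m := Nat.lt_succ_iff.mp (Finset.mem_range.mp hk)
          have he : D + c + m - k = m - k + (D + c) := by omega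
          rw [he, pow_add, neg_pow]
          simp only [map_mul, map_pow, map_neg, map_one, Polynomial.C_eq_natCast]
          ring
  have := congrArg (fun p : ℤ[X] => p.coeff D) hpoly
  simp only [Polynomial.finset_sum_coeff] at this
  rw [Polynomial.coeff_one_add_X_pow] at this
  have hterm : ∀ k ∈ Finset.range (m + 1),
      ((C ((-1 : ℤ) ^ k * (Nat.choose m k : ℤ))) * X ^ k * (1 + X) ^ (D + c + m - k)).coeff D =
        (-1 : ℤ) ^ k * (Nat.choose m k : ℤ) * (Nat.choose (D + c + m - k) (D - k) : ℤ) := by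
    intro k hk
    have hk' : k ≤ m := Nat.lt_succ_iff.mp (Finset.mem_range.mp hk)
    have hkD : k ≤ D := hk'.trans hmD
    rw [mul_assoc, Polynomial.coeff_C_mul, Polynomial.coeff_X_pow_mul', if_pos hkD,
      Polynomial.coeff_one_add_X_pow]
  rw [Finset.sum_congr rfl hterm] at this
  rw [this]
  refine (Finset.sum_subset (Finset.range_subset_range.mpr (by omega)) ?_).symm
  intro k _ hk
  have hmk : m < k := by
    simp only [Finset.mem_range, not_lt] at hk; omega
  rw [Nat.choose_eq_zero_of_lt hmk]
  simp

theorem stmt_3 (n d j : ℕ) (hjd : j ≤ d) (hn : 2 * d ≤ n) :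
    ∑ i ∈ Finset.Icc j d,
        ((-1 : ℤ) ^ (i - j) * (Nat.choose (d - j) (i - j) : ℤ) *
          (Nat.choose (n - i - j) (d - i) : ℤ)) =
      (Nat.choose (n - d - j) (n - 2 * d) : ℤ) := by
  have hkey := key (d - j) (d - j) (n - 2 * d) le_rfl
  have hIcc : Finset.Icc j d = Finset.Ico j (d + 1) := by
    rw [Finset.Ico_add_one_right_eq_Icc]
  rw [hIcc, Finset.sum_Ico_eq_sum_range]
  have hrange : d + 1 - j = (d - j) + 1 := by omega
  rw [hrange]
  have hsum : ∀ k ∈ Finset.range ((d - j) + 1),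
      ((-1 : ℤ) ^ (j + k - j) * (Nat.choose (d - j) (j + k - j) : ℤ) *
        (Nat.choose (n - (j + k) - j) (d - (j + k)) : ℤ)) =
      ((-1 : ℤ) ^ k * (Nat.choose (d - j) k : ℤ) *
        (Nat.choose ((d - j) + (n - 2 * d) + (d - j) - k) ((d - j) - k) : ℤ)) := by
    intro k hk
    have hk' : k ≤ d - j := Nat.lt_succ_iff.mp (Finset.mem_range.mp hk)
    have h1 : j + k - j = k := by omega
    have h2 : n - (j + k) - j = (d - j) + (n - 2 * d) + (d - j) - k := by omega
    have h3 : d - (j + k) = (d - j) - k := by omega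
    rw [h1, h2, h3]
  rw [Finset.sum_congr rfl hsum, hkey]
  have h4 : (d - j) + (n - 2 * d) = n - d - j := by omega
  have h5 : n - d - j - (n - 2 * d) = d - j := by omega
  have h6 : ((d - j) + (n - 2 * d)).choose (d - j) = (n - d - j).choose (n - 2 * d) := by
    rw [h4, ← h5, Nat.choose_symm (by omega)]
  exact_mod_cast congrArg (Nat.cast : ℕ → ℤ) h6
end

section
/- Let k > d ≥ i ≥ 3 and n ≥ 2k+2d-3 be integers, and define S_i(n) = (k-1)_{i-1}/(n-k-1)_{i-1} and T_i(n) = [(d-1)_{i-1}]² · (n-k-1)_{i-1} / ([(n-d-1)_{i-1}]² · (k-1)_{i-1}), where (x)_m = x(x-1)···(x-m+1) is the falling factorial. Then k·S_i(n) - d·T_i(n) ≤ k - d. -/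
noncomputable def auxS (k n j : ℕ) : ℝ :=
  ((k:ℝ) - 1 - (j:ℝ)) / ((n:ℝ) - (k:ℝ) - 1 - (j:ℝ))

noncomputable def auxT (k d n j : ℕ) : ℝ :=
  ((d:ℝ) - 1 - (j:ℝ))^2 * ((n:ℝ) - (k:ℝ) - 1 - (j:ℝ)) /
    (((n:ℝ) - (d:ℝ) - 1 - (j:ℝ))^2 * ((k:ℝ) - 1 - (j:ℝ)))

lemma stmt7_facts (k d n j : ℕ) (hd : 3 ≤ d) (hdk : d < k) (hn : 2*k+2*d ≤ n+3)
    (hj : j+2 ≤ d) :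
    (2:ℝ) ≤ (k:ℝ)-1-(j:ℝ) ∧ (1:ℝ) ≤ (d:ℝ)-1-(j:ℝ) ∧ (5:ℝ) ≤ (n:ℝ)-(k:ℝ)-1-(j:ℝ) ∧
    (6:ℝ) ≤ (n:ℝ)-(d:ℝ)-1-(j:ℝ) ∧ (d:ℝ)-1-(j:ℝ) ≤ (k:ℝ)-1-(j:ℝ) ∧
    (n:ℝ)-(k:ℝ)-1-(j:ℝ) ≤ (n:ℝ)-(d:ℝ)-1-(j:ℝ) ∧
    (k:ℝ)-1-(j:ℝ)+1 ≤ (n:ℝ)-(k:ℝ)-1-(j:ℝ) := by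
  have h1 : (3:ℝ) ≤ (d:ℝ) := by exact_mod_cast hd
  have h2 : (d:ℝ)+1 ≤ (k:ℝ) := by exact_mod_cast hdk
  have h3 : 2*(k:ℝ)+2*(d:ℝ) ≤ (n:ℝ)+3 := by exact_mod_cast hn
  have h4 : (j:ℝ)+2 ≤ (d:ℝ) := by exact_mod_cast hj
  exact ⟨by linarith, by linarith, by linarith, by linarith, by linarith, by linarith,
    by linarith⟩

lemma stmt7_sPos (k d n j : ℕ) (hd : 3 ≤ d) (hdk : d < k) (hn : 2*k+2*d ≤ n+3)
    (hj : j+2 ≤ d) : 0 < auxS k n j := by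
  obtain ⟨f1, f2, f3, f4, f5, f6, f7⟩ := stmt7_facts k d n j hd hdk hn hj
  simp only [auxS]
  exact div_pos (by linarith) (by linarith)

lemma stmt7_sLt1 (k d n j : ℕ) (hd : 3 ≤ d) (hdk : d < k) (hn : 2*k+2*d ≤ n+3)
    (hj : j+2 ≤ d) : auxS k n j < 1 := by
  obtain ⟨f1, f2, f3, f4, f5, f6, f7⟩ := stmt7_facts k d n j hd hdk hn hj
  simp only [auxS]
  rw [div_lt_one (by linarith)]
  linarith

lemma stmt7_tNonneg (k d n j : ℕ) (hd : 3 ≤ d) (hdk : d < k) (hn : 2*k+2*d ≤ n+3)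
    (hj : j+2 ≤ d) : 0 ≤ auxT k d n j := by
  obtain ⟨f1, f2, f3, f4, f5, f6, f7⟩ := stmt7_facts k d n j hd hdk hn hj
  simp only [auxT]
  exact div_nonneg (mul_nonneg (sq_nonneg _) (by linarith))
    (mul_nonneg (sq_nonneg _) (by linarith))

lemma stmt7_tLeS (k d n j : ℕ) (hd : 3 ≤ d) (hdk : d < k) (hn : 2*k+2*d ≤ n+3)
    (hj : j+2 ≤ d) : auxT k d n j ≤ auxS k n j := by
  obtain ⟨f1, f2, f3, f4, f5, f6, f7⟩ := stmt7_facts k d n j hd hdk hn hj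
  simp only [auxS, auxT]
  rw [div_le_div_iff₀ (mul_pos (pow_pos (by linarith) 2) (by linarith)) (by linarith)]
  have hqP : ((d:ℝ)-1-(j:ℝ)) * ((n:ℝ)-(k:ℝ)-1-(j:ℝ)) ≤
      ((k:ℝ)-1-(j:ℝ)) * ((n:ℝ)-(d:ℝ)-1-(j:ℝ)) :=
    mul_le_mul f5 f6 (by linarith) (by linarith)
  have h := mul_le_mul hqP hqP (mul_nonneg (by linarith) (by linarith))
    (mul_nonneg (by linarith) (by linarith))
  nlinarith [h]

lemma stmt7_tLe1 (k d n j : ℕ) (hd : 3 ≤ d) (hdk : d < k) (hn : 2*k+2*d ≤ n+3)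
    (hj : j+2 ≤ d) : auxT k d n j ≤ 1 :=
  le_trans (stmt7_tLeS k d n j hd hdk hn hj) (le_of_lt (stmt7_sLt1 k d n j hd hdk hn hj))

lemma stmt7_sLeS0 (k d n j : ℕ) (hd : 3 ≤ d) (hdk : d < k) (hn : 2*k+2*d ≤ n+3)
    (hj : j+2 ≤ d) : auxS k n j ≤ auxS k n 0 := by
  obtain ⟨f1, f2, f3, f4, f5, f6, f7⟩ := stmt7_facts k d n j hd hdk hn hj
  simp only [auxS, Nat.cast_zero, sub_zero]
  rw [div_le_div_iff₀ (by linarith) (by linarith)]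
  have hj0 : (0:ℝ) ≤ (j:ℝ) := Nat.cast_nonneg j
  have hKN : (k:ℝ)-1 ≤ (n:ℝ)-(k:ℝ)-1 := by linarith
  nlinarith [mul_le_mul_of_nonneg_left hKN hj0]

lemma stmt7_stBound (k d n j : ℕ) (hd : 3 ≤ d) (hdk : d < k) (hn : 2*k+2*d ≤ n+3)
    (hj : j+2 ≤ d) :
    auxS k n j - auxT k d n j ≤
      2*((k:ℝ)-(d:ℝ))*((n:ℝ)-2-2*(j:ℝ)) /
        (((n:ℝ)-(k:ℝ)-1-(j:ℝ))*((n:ℝ)-(d:ℝ)-1-(j:ℝ))) := by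
  obtain ⟨f1, f2, f3, f4, f5, f6, f7⟩ := stmt7_facts k d n j hd hdk hn hj
  have hp : (0:ℝ) < (k:ℝ)-1-(j:ℝ) := by linarith
  have hP : (0:ℝ) < (n:ℝ)-(k:ℝ)-1-(j:ℝ) := by linarith
  have hQ : (0:ℝ) < (n:ℝ)-(d:ℝ)-1-(j:ℝ) := by linarith
  have hpne := ne_of_gt hp
  have hPne := ne_of_gt hP
  have hQne := ne_of_gt hQ
  rw [← sub_nonneg]
  have h9 : 2*((k:ℝ)-(d:ℝ))*((n:ℝ)-2-2*(j:ℝ)) /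
        (((n:ℝ)-(k:ℝ)-1-(j:ℝ))*((n:ℝ)-(d:ℝ)-1-(j:ℝ))) - (auxS k n j - auxT k d n j) =
      (((k:ℝ)-(d:ℝ))*((n:ℝ)-2-2*(j:ℝ)))^2 /
        (((k:ℝ)-1-(j:ℝ))*(((n:ℝ)-(k:ℝ)-1-(j:ℝ))*((n:ℝ)-(d:ℝ)-1-(j:ℝ))^2)) := by
    simp only [auxS, auxT]
    field_simp
    ring
  rw [h9]
  exact div_nonneg (sq_nonneg _) (le_of_lt (mul_pos hp (mul_pos hP (pow_pos hQ 2))))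

lemma stmt7_prodRangeTwo (f : ℕ → ℝ) : ∏ j ∈ Finset.range 2, f j = f 0 * f 1 := by
  rw [show (2:ℕ) = 1+1 from rfl, Finset.prod_range_succ, Finset.prod_range_one]

lemma stmt7_prodT_nonneg (k d n : ℕ) (hd : 3 ≤ d) (hdk : d < k) (hn : 2*k+2*d ≤ n+3)
    (m : ℕ) (hm : m+1 ≤ d) : 0 ≤ ∏ j ∈ Finset.range m, auxT k d n j :=
  Finset.prod_nonneg fun j hj =>
    stmt7_tNonneg k d n j hd hdk hn (by rw [Finset.mem_range] at hj; omega)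

lemma stmt7_prodT_le (k d n : ℕ) (hd : 3 ≤ d) (hdk : d < k) (hn : 2*k+2*d ≤ n+3) :
    ∀ m : ℕ, 2 ≤ m → m+1 ≤ d →
      (∏ j ∈ Finset.range m, auxT k d n j) ≤ auxT k d n 0 * auxT k d n 1 := by
  intro m hm
  induction m, hm using Nat.le_induction with
  | base =>
    intro _
    rw [stmt7_prodRangeTwo]
  | succ m hm ih =>
    intro hmd
    rw [Finset.prod_range_succ]
    have h1 := ih (by omega)
    have h2 := stmt7_tLe1 k d n m hd hdk hn (by omega)
    have h3 := stmt7_prodT_nonneg k d n hd hdk hn m (by omega)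
    have h4 := mul_le_mul_of_nonneg_left h2 h3
    rw [mul_one] at h4
    exact le_trans h4 h1

lemma stmt7_fracIneq (c k sn sd tn td : ℝ) (hsd : 0 < sd) (htd : 0 < td)
    (h : 0 ≤ c*(sd*td - tn*sd) - k*(sn*td - tn*sd)) :
    k*(sn/sd - tn/td) ≤ c*(1 - tn/td) := by
  rw [← sub_nonneg]
  have h2 : c*(1 - tn/td) - k*(sn/sd - tn/td)
      = (c*(sd*td - tn*sd) - k*(sn*td - tn*sd))/(sd*td) := by
    field_simp
  rw [h2]
  exact div_nonneg h (mul_pos hsd htd).le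

lemma stmt7_fracIneq2 (k tn td u v c p P : ℝ) (htd : 0 < td) (hv : 0 < v) (hP : 0 < P)
    (h : 0 ≤ c*(P-p)^2*(td*v) - k*tn*u*P^2) :
    k*(tn/td)*(u/v) ≤ c*(1 - p/P)^2 := by
  rw [← sub_nonneg]
  have h2 : c*(1 - p/P)^2 - k*(tn/td)*(u/v)
      = (c*(P-p)^2*(td*v) - k*tn*u*P^2)/(P^2*(td*v)) := by
    field_simp
  rw [h2]
  exact div_nonneg h (mul_pos (pow_pos hP 2) (mul_pos htd hv)).le

set_option maxHeartbeats 1000000 in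
lemma stmt7_cert1 (x y z : ℝ) (hx : 0 ≤ x) (hy : 0 ≤ y) (hz : 0 ≤ z) :
    (0:ℝ) ≤ 74304 + 163656*z + 93936*z*z + 24450*z*z*z + 3282*z*z*z*z + 222*z*z*z*z*z + 6*z*z*z*z*z*z + 298224*y + 550572*y*z + 281304*y*z*z + 65485*y*z*z*z + 7825*y*z*z*z*z + 467*y*z*z*z*z*z + 11*y*z*z*z*z*z*z + 475320*y*y + 754068*y*y*z + 336667*y*y*z*z + 67686*y*y*z*z*z + 6829*y*y*z*z*z*z + 332*y*y*z*z*z*z*z + 6*y*y*z*z*z*z*z*z + 398328*y*y*y + 552676*y*y*y*z + 210942*y*y*y*z*z + 35099*y*y*y*z*z*z + 2785*y*y*y*z*z*z*z + 97*y*y*y*z*z*z*z*z + 1*y*y*y*z*z*z*z*z*z + 196548*y*y*y*y + 239900*y*y*y*y*z + 75627*y*y*y*y*z*z + 9760*y*y*y*y*z*z*z + 539*y*y*y*y*z*z*z*z + 10*y*y*y*y*z*z*z*z*z + 59424*y*y*y*y*y + 63640*y*y*y*y*y*z + 15640*y*y*y*y*y*z*z + 1392*y*y*y*y*y*z*z*z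 + 40*y*y*y*y*y*z*z*z*z + 10860*y*y*y*y*y*y + 10112*y*y*y*y*y*y*z + 1736*y*y*y*y*y*y*z*z + 80*y*y*y*y*y*y*z*z*z + 1104*y*y*y*y*y*y*y + 880*y*y*y*y*y*y*y*z + 80*y*y*y*y*y*y*y*z*z + 48*y*y*y*y*y*y*y*y + 32*y*y*y*y*y*y*y*y*z + 304704*x + 549444*x*z + 264292*x*z*z + 56363*x*z*z*z + 5939*x*z*z*z*z + 293*x*z*z*z*z*z + 5*x*z*z*z*z*z*z + 1136568*x*y + 1683488*x*y*z + 708078*x*y*z*z + 132421*x*y*z*z*z + 12107*x*y*z*z*z*z + 507*x*y*z*z*z*z*z + 7*x*y*z*z*z*z*z*z + 1655152*x*y*y + 2042502*x*y*y*z + 728709*x*y*y*z*z + 113254*x*y*y*z*z*z + 8241*x*y*y*z*z*z*z + 252*x*y*y*z*z*z*z*z + 2*x*y*y*z*z*z*z*z*z + 1237884*x*y*y*y + 1280280*x*y*y*y*z + 373748*x*y*y*y*z*z + 45090*x*y*y*y*z*z*z + 2300*x*y*y*y*z*z*z*z + 38*x*y*y*y*z*z*z*z*z + 531988*x*y*y*y*y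 + 454706*x*y*y*y*y*z + 102357*x*y*y*y*y*z*z + 8510*x*y*y*y*y*z*z*z + 227*x*y*y*y*y*z*z*z*z + 136116*x*y*y*y*y*y + 92460*x*y*y*y*y*y*z + 14340*x*y*y*y*y*y*z*z + 616*x*y*y*y*y*y*z*z*z + 20260*x*y*y*y*y*y*y + 10024*x*y*y*y*y*y*y*z + 808*x*y*y*y*y*y*y*z*z + 1584*x*y*y*y*y*y*y*y + 448*x*y*y*y*y*y*y*y*z + 48*x*y*y*y*y*y*y*y*y + 534816*x*x + 784290*x*x*z + 308012*x*x*z*z + 51657*x*x*z*z*z + 3997*x*x*z*z*z*z + 127*x*x*z*z*z*z*z + 1*x*x*z*z*z*z*z*z + 1828476*x*x*y + 2158175*x*x*y*z + 726043*x*x*y*z*z + 104203*x*x*y*z*z*z + 6765*x*x*y*z*z*z*z + 173*x*x*y*z*z*z*z*z + 1*x*x*y*z*z*z*z*z*z + 2384630*x*x*y*y + 2264710*x*x*y*y*z + 620666*x*x*y*y*z*z + 69742*x*x*y*y*z*z*z + 3234*x*x*y*y*z*z*z*z + 46*x*x*y*y*z*z*z*z*z + 1541056*x*x*y*y*y + 1167163*x*x*y*y*y*z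 + 245003*x*x*y*y*y*z*z + 19028*x*x*y*y*y*z*z*z + 466*x*x*y*y*y*z*z*z*z + 548638*x*x*y*y*y*y + 317874*x*x*y*y*y*y*z + 45616*x*x*y*y*y*y*z*z + 1832*x*x*y*y*y*y*z*z*z + 109496*x*x*y*y*y*y*y + 43968*x*x*y*y*y*y*y*z + 3248*x*x*y*y*y*y*y*z*z + 11424*x*x*y*y*y*y*y*y + 2432*x*x*y*y*y*y*y*y*z + 480*x*x*y*y*y*y*y*y*y + 526464*x*x*x + 617103*x*x*x*z + 190277*x*x*x*z*z + 23514*x*x*x*z*z*z + 1184*x*x*x*z*z*z*z + 18*x*x*x*z*z*z*z*z + 1623426*x*x*x*y + 1498137*x*x*x*y*z + 386005*x*x*x*y*z*z + 39542*x*x*x*y*z*z*z + 1594*x*x*x*y*z*z*z*z + 18*x*x*x*y*z*z*z*z*z + 1851014*x*x*x*y*y + 1314100*x*x*x*y*y*z + 259376*x*x*x*y*y*z*z + 18660*x*x*x*y*y*z*z*z + 410*x*x*x*y*y*z*z*z*z + 991584*x*x*x*y*y*y + 523436*x*x*x*y*y*y*z + 70338*x*x*x*y*y*y*z*z + 2632*x*x*x*y*y*y*z*z*z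 + 272960*x*x*x*y*y*y*y + 97226*x*x*x*y*y*y*y*z + 6690*x*x*x*y*y*y*y*z*z + 37452*x*x*x*y*y*y*y*y + 6856*x*x*x*y*y*y*y*y*z + 2024*x*x*x*y*y*y*y*y*y + 318564*x*x*x*x + 289077*x*x*x*x*z + 65695*x*x*x*x*z*z + 5312*x*x*x*x*z*z*z + 130*x*x*x*x*z*z*z*z + 868110*x*x*x*x*y + 604600*x*x*x*x*y*z + 111238*x*x*x*x*y*z*z + 7132*x*x*x*x*y*z*z*z + 130*x*x*x*x*y*z*z*z*z + 837556*x*x*x*x*y*y + 419956*x*x*x*x*y*y*z + 52992*x*x*x*x*y*y*z*z + 1820*x*x*x*x*y*y*z*z*z + 349352*x*x*x*x*y*y*y + 115415*x*x*x*x*y*y*y*z + 7449*x*x*x*x*y*y*y*z*z + 65990*x*x*x*x*y*y*y*y + 10982*x*x*x*x*y*y*y*y*z + 4648*x*x*x*x*y*y*y*y*y + 121500*x*x*x*x*x + 80619*x*x*x*x*x*z + 12015*x*x*x*x*x*z*z + 476*x*x*x*x*x*z*z*z + 284526*x*x*x*x*x*y + 140467*x*x*x*x*x*y*z + 16227*x*x*x*x*x*y*z*z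 + 476*x*x*x*x*x*y*z*z*z + 220842*x*x*x*x*x*y*y + 69846*x*x*x*x*x*y*y*z + 4212*x*x*x*x*x*y*y*z*z + 64044*x*x*x*x*x*y*y*y + 9998*x*x*x*x*x*y*y*y*z + 6228*x*x*x*x*x*y*y*y*y + 28548*x*x*x*x*x*x + 12393*x*x*x*x*x*x*z + 909*x*x*x*x*x*x*z*z + 55110*x*x*x*x*x*x*y + 17091*x*x*x*x*x*x*y*z + 909*x*x*x*x*x*x*y*z*z + 31338*x*x*x*x*x*x*y*y + 4698*x*x*x*x*x*x*y*y*z + 4776*x*x*x*x*x*x*y*y*y + 3780*x*x*x*x*x*x*x + 810*x*x*x*x*x*x*x*z + 5616*x*x*x*x*x*x*x*y + 810*x*x*x*x*x*x*x*y*z + 1836*x*x*x*x*x*x*x*y*y + 216*x*x*x*x*x*x*x*x + 216*x*x*x*x*x*x*x*x*y := by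
  repeat' apply add_nonneg
  all_goals repeat' apply mul_nonneg
  all_goals first | exact hx | exact hy | exact hz | norm_num

set_option maxHeartbeats 1000000 in
lemma stmt7_cert2 (x y z : ℝ) (hx : 0 ≤ x) (hy : 0 ≤ y) (hz : 0 ≤ z) :
    (0:ℝ) ≤ 117184320 + 137577960*z + 67464960*z*z + 18340020*z*z*z + 3050172*z*z*z*z + 319536*z*z*z*z*z + 20664*z*z*z*z*z*z + 756*z*z*z*z*z*z*z + 12*z*z*z*z*z*z*z*z + 231113304*y + 242863332*y*z + 107095112*y*z*z + 26063985*y*z*z*z + 3838059*y*z*z*z*z + 349806*y*z*z*z*z*z + 19182*y*z*z*z*z*z*z + 573*y*z*z*z*z*z*z*z + 7*y*z*z*z*z*z*z*z*z + 189932568*y*y + 180324248*y*y*z + 71336186*y*y*z*z + 15350344*y*y*z*z*z + 1954245*y*y*z*z*z*z + 148924*y*y*z*z*z*z*z + 6480*y*y*z*z*z*z*z*z + 140*y*y*z*z*z*z*z*z*z + 1*y*y*z*z*z*z*z*z*z*z + 86774576*y*y*y + 74338880*y*y*y*z + 26099604*y*y*y*z*z + 4858667*y*y*y*z*z*z + 515228*y*y*y*z*z*z*z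 + 30810*y*y*y*z*z*z*z*z + 944*y*y*y*z*z*z*z*z*z + 11*y*y*y*z*z*z*z*z*z*z + 24357584*y*y*y*y + 18681648*y*y*y*y*z + 5714170*y*y*y*y*z*z + 889508*y*y*y*y*z*z*z + 73980*y*y*y*y*z*z*z*z + 3092*y*y*y*y*z*z*z*z*z + 50*y*y*y*y*z*z*z*z*z*z + 4323992*y*y*y*y*y + 2929612*y*y*y*y*y*z + 758856*y*y*y*y*y*z*z + 93484*y*y*y*y*y*z*z*z + 5456*y*y*y*y*y*z*z*z*z + 120*y*y*y*y*y*z*z*z*z*z + 475256*y*y*y*y*y*y + 278960*y*y*y*y*y*y*z + 58536*y*y*y*y*y*y*z*z + 5152*y*y*y*y*y*y*z*z*z + 160*y*y*y*y*y*y*z*z*z*z + 29600*y*y*y*y*y*y*y + 14640*y*y*y*y*y*y*y*z + 2304*y*y*y*y*y*y*y*z*z + 112*y*y*y*y*y*y*y*z*z*z + 800*y*y*y*y*y*y*y*y + 320*y*y*y*y*y*y*y*y*z + 32*y*y*y*y*y*y*y*y*z*z + 363860424*x + 386993772*x*z + 168785552*x*z*z + 40037757*x*z*z*z + 5678667*x*z*z*z*z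 + 492174*x*z*z*z*z*z + 25206*x*z*z*z*z*z*z + 681*x*z*z*z*z*z*z*z + 7*x*z*z*z*z*z*z*z*z + 659368440*x*y + 615115784*x*y*z + 236400614*x*y*z*z + 49037115*x*y*z*z*z + 5975350*x*y*z*z*z*z + 431886*x*y*z*z*z*z*z + 17554*x*y*z*z*z*z*z*z + 343*x*y*z*z*z*z*z*z*z + 2*x*y*z*z*z*z*z*z*z*z + 488892704*x*y*y + 403889444*x*y*y*z + 136021134*x*y*y*z*z + 24206256*x*y*y*z*z*z + 2444694*x*y*y*z*z*z*z + 138370*x*y*y*z*z*z*z*z + 3964*x*y*y*z*z*z*z*z*z + 42*x*y*y*z*z*z*z*z*z*z + 198183056*x*y*y*y + 144280608*x*y*y*y*z + 41827712*x*y*y*y*z*z + 6171194*x*y*y*y*z*z*z + 486078*x*y*y*y*z*z*z*z + 19174*x*y*y*y*z*z*z*z*z + 290*x*y*y*y*z*z*z*z*z*z + 48447096*x*y*y*y*y + 30614200*x*y*y*y*y*z + 7404236*x*y*y*y*y*z*z + 854656*x*y*y*y*y*z*z*z + 46860*x*y*y*y*y*z*z*z*z + 968*x*y*y*y*y*z*z*z*z*z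 + 7317080*x*y*y*y*y*y + 3909104*x*y*y*y*y*y*z + 748080*x*y*y*y*y*y*z*z + 60568*x*y*y*y*y*y*z*z*z + 1744*x*y*y*y*y*y*z*z*z*z + 662880*x*y*y*y*y*y*y + 286624*x*y*y*y*y*y*y*z + 39280*x*y*y*y*y*y*y*z*z + 1696*x*y*y*y*y*y*y*z*z*z + 32480*x*y*y*y*y*y*y*y + 10496*x*y*y*y*y*y*y*y*z + 800*x*y*y*y*y*y*y*y*z*z + 640*x*y*y*y*y*y*y*y*y + 128*x*y*y*y*y*y*y*y*y*z + 504937152*x*x + 481643346*x*x*z + 184121544*x*x*z*z + 37352411*x*x*z*z*z + 4392941*x*x*z*z*z*z + 302296*x*x*z*z*z*z*z + 11482*x*x*z*z*z*z*z*z + 203*x*x*z*z*z*z*z*z*z + 1*x*x*z*z*z*z*z*z*z*z + 832110126*x*x*y + 679067745*x*x*y*z + 222941179*x*x*y*z*z + 38332586*x*x*y*z*z*z + 3710809*x*x*y*z*z*z*z + 199354*x*x*y*z*z*z*z*z + 5334*x*x*y*z*z*z*z*z*z + 51*x*x*y*z*z*z*z*z*z*z + 548272134*x*x*y*y + 386316682*x*x*y*y*z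 + 107726245*x*x*y*y*z*z + 15224258*x*x*y*y*z*z*z + 1143595*x*x*y*y*z*z*z*z + 42726*x*x*y*y*z*z*z*z*z + 604*x*x*y*y*z*z*z*z*z*z + 193157672*x*x*y*y*y + 116231389*x*x*y*y*y*z + 26721582*x*x*y*y*y*z*z + 2930141*x*x*y*y*y*z*z*z + 152402*x*x*y*y*y*z*z*z*z + 2974*x*x*y*y*y*z*z*z*z*z + 39956538*x*x*y*y*y*y + 19977264*x*x*y*y*y*y*z + 3583406*x*x*y*y*y*y*z*z + 272744*x*x*y*y*y*y*z*z*z + 7396*x*x*y*y*y*y*z*z*z*z + 4923758*x*x*y*y*y*y*y + 1944846*x*x*y*y*y*y*y*z + 244584*x*x*y*y*y*y*y*z*z + 9768*x*x*y*y*y*y*y*z*z*z + 344156*x*x*y*y*y*y*y*y + 97376*x*x*y*y*y*y*y*y*z + 6544*x*x*y*y*y*y*y*y*z*z + 11776*x*x*y*y*y*y*y*y*y + 1856*x*x*y*y*y*y*y*y*y*z + 128*x*x*y*y*y*y*y*y*y*y + 412144218*x*x*x + 348045885*x*x*x*z + 114380257*x*x*x*z*z + 19303737*x*x*x*z*z*z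 + 1807323*x*x*x*z*z*z*z + 92534*x*x*x*z*z*z*z*z + 2314*x*x*x*z*z*z*z*z*z + 20*x*x*x*z*z*z*z*z*z*z + 609523632*x*x*x*y + 426756793*x*x*x*y*z + 116434880*x*x*x*y*z*z + 15935449*x*x*x*y*z*z*z + 1148968*x*x*x*y*z*z*z*z + 40768*x*x*x*y*z*z*z*z*z + 538*x*x*x*y*z*z*z*z*z*z + 349869646*x*x*x*y*y + 204550268*x*x*x*y*y*z + 45359482*x*x*x*y*y*z*z + 4773650*x*x*x*y*y*z*z*z + 237078*x*x*x*y*y*z*z*z*z + 4384*x*x*x*y*y*z*z*z*z*z + 104145958*x*x*x*y*y*y + 49750790*x*x*x*y*y*y*z + 8506742*x*x*x*y*y*y*z*z + 616418*x*x*x*y*y*y*z*z*z + 15880*x*x*x*y*y*y*z*z*z*z + 17491658*x*x*x*y*y*y*y + 6489702*x*x*x*y*y*y*y*z + 767788*x*x*x*y*y*y*y*z*z + 28912*x*x*x*y*y*y*y*z*z*z + 1646976*x*x*x*y*y*y*y*y + 427692*x*x*x*y*y*y*y*y*z + 26528*x*x*x*y*y*y*y*y*z*z + 78808*x*x*x*y*y*y*y*y*y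 + 10944*x*x*x*y*y*y*y*y*y*z + 1408*x*x*x*y*y*y*y*y*y*y + 218960658*x*x*x*x + 160901889*x*x*x*x*z + 44257181*x*x*x*x*z*z + 5968437*x*x*x*x*z*z*z + 417051*x*x*x*x*z*z*z*z + 14114*x*x*x*x*z*z*z*z*z + 174*x*x*x*x*z*z*z*z*z*z + 285528666*x*x*x*x*y + 166970120*x*x*x*x*y*z + 36369137*x*x*x*x*y*z*z + 3715516*x*x*x*x*y*z*z*z + 177357*x*x*x*x*y*z*z*z*z + 3116*x*x*x*x*y*z*z*z*z*z + 138941360*x*x*x*x*y*y + 64751594*x*x*x*x*y*y*z + 10709497*x*x*x*x*y*y*z*z + 746216*x*x*x*x*y*y*z*z*z + 18377*x*x*x*x*y*y*z*z*z*z + 33549872*x*x*x*x*y*y*y + 11933977*x*x*x*x*y*y*y*z + 1349548*x*x*x*x*y*y*y*z*z + 48479*x*x*x*x*y*y*y*z*z*z + 4287022*x*x*x*x*y*y*y*y + 1049652*x*x*x*x*y*y*y*y*z + 61458*x*x*x*x*y*y*y*y*z*z + 273878*x*x*x*x*y*y*y*y*y + 35086*x*x*x*x*y*y*y*y*y*z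 + 6716*x*x*x*x*y*y*y*y*y*y + 79047936*x*x*x*x*x + 49343529*x*x*x*x*x*z + 10922193*x*x*x*x*x*z*z + 1104047*x*x*x*x*x*z*z*z + 51177*x*x*x*x*x*z*z*z*z + 858*x*x*x*x*x*z*z*z*z*z + 88681254*x*x*x*x*x*y + 41643417*x*x*x*x*x*y*z + 6793930*x*x*x*x*x*y*z*z + 460669*x*x*x*x*x*y*z*z*z + 10918*x*x*x*x*x*y*z*z*z*z + 35158866*x*x*x*x*x*y*y + 12254188*x*x*x*x*x*y*y*z + 1344300*x*x*x*x*x*y*y*z*z + 46522*x*x*x*x*x*y*y*z*z*z + 6457502*x*x*x*x*x*y*y*y + 1521160*x*x*x*x*x*y*y*y*z + 85358*x*x*x*x*x*y*y*y*z*z + 557798*x*x*x*x*x*y*y*y*y + 67630*x*x*x*x*x*y*y*y*y*z + 18116*x*x*x*x*x*y*y*y*y*y + 19619298*x*x*x*x*x*x + 10036917*x*x*x*x*x*x*z + 1679041*x*x*x*x*x*x*z*z + 113143*x*x*x*x*x*x*z*z*z + 2609*x*x*x*x*x*x*z*z*z*z + 18255726*x*x*x*x*x*x*y + 6464863*x*x*x*x*x*x*y*z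 + 702756*x*x*x*x*x*x*y*z*z + 23727*x*x*x*x*x*x*y*z*z*z + 5535682*x*x*x*x*x*x*y*y + 1283700*x*x*x*x*x*x*y*y*z + 70086*x*x*x*x*x*x*y*y*z*z + 687612*x*x*x*x*x*x*y*y*y + 80496*x*x*x*x*x*x*y*y*y*z + 30104*x*x*x*x*x*x*y*y*y*y + 3301776*x*x*x*x*x*x*x + 1305780*x*x*x*x*x*x*x*z + 147024*x*x*x*x*x*x*x*z*z + 4956*x*x*x*x*x*x*x*z*z*z + 2401050*x*x*x*x*x*x*x*y + 571104*x*x*x*x*x*x*x*y*z + 31050*x*x*x*x*x*x*x*y*z*z + 495756*x*x*x*x*x*x*x*y*y + 57420*x*x*x*x*x*x*x*y*y*z + 31248*x*x*x*x*x*x*x*y*y*y + 360108*x*x*x*x*x*x*x*x + 98604*x*x*x*x*x*x*x*x*z + 5616*x*x*x*x*x*x*x*x*z*z + 183006*x*x*x*x*x*x*x*x*y + 21978*x*x*x*x*x*x*x*x*y*z + 19332*x*x*x*x*x*x*x*x*y*y + 22950*x*x*x*x*x*x*x*x*x + 3294*x*x*x*x*x*x*x*x*x*z + 6156*x*x*x*x*x*x*x*x*x*y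 + 648*x*x*x*x*x*x*x*x*x*x := by
  repeat' apply add_nonneg
  all_goals repeat' apply mul_nonneg
  all_goals first | exact hx | exact hy | exact hz | norm_num

set_option maxHeartbeats 2000000 in
lemma stmt7_key (k d n : ℕ) (hd : 3 ≤ d) (hdk : d < k) (hn : 2*k+2*d ≤ n+3) :
    ∀ m : ℕ, 2 ≤ m → m+1 ≤ d →
      (k:ℝ) * ((∏ j ∈ Finset.range m, auxS k n j) - ∏ j ∈ Finset.range m, auxT k d n j)
        ≤ ((k:ℝ)-(d:ℝ)) * (1 - ∏ j ∈ Finset.range m, auxT k d n j) := by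
  have h1 : (3:ℝ) ≤ (d:ℝ) := by exact_mod_cast hd
  have h2 : (d:ℝ)+1 ≤ (k:ℝ) := by exact_mod_cast hdk
  have h3 : 2*(k:ℝ)+2*(d:ℝ) ≤ (n:ℝ)+3 := by exact_mod_cast hn
  have hC0 : (0:ℝ) ≤ (k:ℝ)-(d:ℝ) := by linarith
  intro m hm
  induction m, hm using Nat.le_induction with
  | base =>
    intro _
    rw [stmt7_prodRangeTwo, stmt7_prodRangeTwo]
    have hp0 : (0:ℝ) < (k:ℝ)-1 := by linarith
    have hp1 : (0:ℝ) < (k:ℝ)-1-1 := by linarith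
    have hP0 : (0:ℝ) < (n:ℝ)-(k:ℝ)-1 := by linarith
    have hP1 : (0:ℝ) < (n:ℝ)-(k:ℝ)-1-1 := by linarith
    have hQ0 : (0:ℝ) < (n:ℝ)-(d:ℝ)-1 := by linarith
    have hQ1 : (0:ℝ) < (n:ℝ)-(d:ℝ)-1-1 := by linarith
    have e0 : auxS k n 0 * auxS k n 1 = (((k:ℝ)-1)*((k:ℝ)-1-1))/(((n:ℝ)-(k:ℝ)-1)*((n:ℝ)-(k:ℝ)-1-1)) := by
      simp only [auxS, Nat.cast_zero, Nat.cast_one, sub_zero]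
      rw [div_mul_div_comm]
    have e1 : auxT k d n 0 * auxT k d n 1 = (((d:ℝ)-1)^2*((n:ℝ)-(k:ℝ)-1)*(((d:ℝ)-1-1)^2*((n:ℝ)-(k:ℝ)-1-1)))/(((n:ℝ)-(d:ℝ)-1)^2*((k:ℝ)-1)*(((n:ℝ)-(d:ℝ)-1-1)^2*((k:ℝ)-1-1))) := by
      simp only [auxT, Nat.cast_zero, Nat.cast_one, sub_zero]
      rw [div_mul_div_comm]
    rw [e0, e1]
    refine stmt7_fracIneq _ _ _ _ _ _ (mul_pos hP0 hP1)
      (mul_pos (mul_pos (pow_pos hQ0 2) hp0) (mul_pos (pow_pos hQ1 2) hp1)) ?_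
    obtain ⟨x, y, z, hx, hy, hz, hkk, hdd, hnn⟩ :
        ∃ x y z : ℝ, 0 ≤ x ∧ 0 ≤ y ∧ 0 ≤ z ∧ (k:ℝ) = x+y+4 ∧ (d:ℝ) = x+3 ∧
          (n:ℝ) = 4*x+2*y+z+11 :=
      ⟨(d:ℝ)-3, (k:ℝ)-(d:ℝ)-1, (n:ℝ)-2*(k:ℝ)-2*(d:ℝ)+3, by linarith, by linarith, by linarith,
        by ring, by ring, by ring⟩
    rw [hkk, hdd, hnn]
    exact le_of_le_of_eq (stmt7_cert1 x y z hx hy hz) (by ring)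
  | succ m hm ih =>
    intro hmd
    have hih := ih (by omega)
    obtain ⟨f1, f2, f3, f4, f5, f6, f7⟩ := stmt7_facts k d n m hd hdk hn (by omega)
    have hmu2 : (2:ℝ) ≤ (m:ℝ) := by exact_mod_cast hm
    have hmud : (m:ℝ)+2 ≤ (d:ℝ) := by
      have h5 : ((m+2 : ℕ) : ℝ) ≤ ((d:ℕ) : ℝ) := by exact_mod_cast (by omega : m+2 ≤ d)
      push_cast at h5
      linarith
    have hp0 : (0:ℝ) < (k:ℝ)-1 := by linarith
    have hp1 : (0:ℝ) < (k:ℝ)-1-1 := by linarith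
    have hP0 : (0:ℝ) < (n:ℝ)-(k:ℝ)-1 := by linarith
    have hP1 : (0:ℝ) < (n:ℝ)-(k:ℝ)-1-1 := by linarith
    have hQ0 : (0:ℝ) < (n:ℝ)-(d:ℝ)-1 := by linarith
    have hQ1 : (0:ℝ) < (n:ℝ)-(d:ℝ)-1-1 := by linarith
    have hlowP : (0:ℝ) < ((n:ℝ)-(k:ℝ)-(d:ℝ)+1) := by linarith
    have hlowQ : (0:ℝ) < ((n:ℝ)-2*(d:ℝ)+1) := by linarith
    have hs_pos := stmt7_sPos k d n m hd hdk hn (by omega)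
    have hs_lt1 := stmt7_sLt1 k d n m hd hdk hn (by omega)
    have ht_le_s := stmt7_tLeS k d n m hd hdk hn (by omega)
    have ht_le1 := stmt7_tLe1 k d n m hd hdk hn (by omega)
    have hs_le_s0 := stmt7_sLeS0 k d n m hd hdk hn (by omega)
    have hs0_lt1 := stmt7_sLt1 k d n 0 hd hdk hn (by omega)
    have hs0_pos := stmt7_sPos k d n 0 hd hdk hn (by omega)
    have ht0_le_s0 := stmt7_tLeS k d n 0 hd hdk hn (by omega)
    have ht0_nn := stmt7_tNonneg k d n 0 hd hdk hn (by omega)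
    have ht1_nn := stmt7_tNonneg k d n 1 hd hdk hn (by omega)
    have ht1_le1 := stmt7_tLe1 k d n 1 hd hdk hn (by omega)
    have hT_nn := stmt7_prodT_nonneg k d n hd hdk hn m (by omega)
    have hT_le := stmt7_prodT_le k d n hd hdk hn m hm (by omega)
    have hKnn : (0:ℝ) ≤ (k:ℝ) := Nat.cast_nonneg k
    have hKt : (0:ℝ) ≤ (k:ℝ)*(auxT k d n 0 * auxT k d n 1) :=
      mul_nonneg hKnn (mul_nonneg ht0_nn ht1_nn)
    have cA : (k:ℝ)*(∏ j ∈ Finset.range m, auxT k d n j)*(auxS k n m - auxT k d n m) ≤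
        (k:ℝ)*(auxT k d n 0 * auxT k d n 1)*(auxS k n m - auxT k d n m) :=
      mul_le_mul_of_nonneg_right (mul_le_mul_of_nonneg_left hT_le hKnn)
        (sub_nonneg.mpr ht_le_s)
    have cB : (k:ℝ)*(auxT k d n 0 * auxT k d n 1)*(auxS k n m - auxT k d n m) ≤
        (k:ℝ)*(auxT k d n 0 * auxT k d n 1)*
          (2*((k:ℝ)-(d:ℝ))*((n:ℝ)-2-2*(m:ℝ)) /
            (((n:ℝ)-(k:ℝ)-1-(m:ℝ))*((n:ℝ)-(d:ℝ)-1-(m:ℝ)))) :=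
      mul_le_mul_of_nonneg_left (stmt7_stBound k d n m hd hdk hn (by omega)) hKt
    have cC : (k:ℝ)*(auxT k d n 0 * auxT k d n 1)*
          (2*((k:ℝ)-(d:ℝ))*((n:ℝ)-2-2*(m:ℝ)) /
            (((n:ℝ)-(k:ℝ)-1-(m:ℝ))*((n:ℝ)-(d:ℝ)-1-(m:ℝ)))) ≤
        (k:ℝ)*(auxT k d n 0 * auxT k d n 1)*
          (2*((k:ℝ)-(d:ℝ))*((n:ℝ)-6) / (((n:ℝ)-(k:ℝ)-(d:ℝ)+1)*((n:ℝ)-2*(d:ℝ)+1))) := by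
      refine mul_le_mul_of_nonneg_left
        (div_le_div₀ (mul_nonneg (by linarith) (by linarith)) ?_
          (mul_pos hlowP hlowQ) ?_) hKt
      · exact mul_le_mul_of_nonneg_left (by linarith) (by linarith)
      · exact mul_le_mul (by linarith) (by linarith) (by linarith) (by linarith)
    have e1 : auxT k d n 0 * auxT k d n 1 = (((d:ℝ)-1)^2*((n:ℝ)-(k:ℝ)-1)*(((d:ℝ)-1-1)^2*((n:ℝ)-(k:ℝ)-1-1)))/(((n:ℝ)-(d:ℝ)-1)^2*((k:ℝ)-1)*(((n:ℝ)-(d:ℝ)-1-1)^2*((k:ℝ)-1-1))) := by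
      simp only [auxT, Nat.cast_zero, Nat.cast_one, sub_zero]
      rw [div_mul_div_comm]
    have es0 : auxS k n 0 = (((k:ℝ)-1))/(((n:ℝ)-(k:ℝ)-1)) := by
      simp only [auxS, Nat.cast_zero, sub_zero]
    have cD : (k:ℝ)*(auxT k d n 0 * auxT k d n 1)*
          (2*((k:ℝ)-(d:ℝ))*((n:ℝ)-6) / (((n:ℝ)-(k:ℝ)-(d:ℝ)+1)*((n:ℝ)-2*(d:ℝ)+1))) ≤
        ((k:ℝ)-(d:ℝ))*(1 - auxS k n 0)^2 := by
      rw [e1, es0]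
      refine stmt7_fracIneq2 _ _ _ _ _ _ _ _
        (mul_pos (mul_pos (pow_pos hQ0 2) hp0) (mul_pos (pow_pos hQ1 2) hp1))
        (mul_pos hlowP hlowQ) hP0 ?_
      obtain ⟨x, y, z, hx, hy, hz, hkk, hdd, hnn⟩ :
          ∃ x y z : ℝ, 0 ≤ x ∧ 0 ≤ y ∧ 0 ≤ z ∧ (k:ℝ) = x+y+5 ∧ (d:ℝ) = x+4 ∧
            (n:ℝ) = 4*x+2*y+z+15 :=
        ⟨(d:ℝ)-4, (k:ℝ)-(d:ℝ)-1, (n:ℝ)-2*(k:ℝ)-2*(d:ℝ)+3, by linarith, by linarith, by linarith,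
          by ring, by ring, by ring⟩
      rw [hkk, hdd, hnn]
      have hy1 : (0:ℝ) ≤ y+1 := by linarith
      exact le_of_le_of_eq (mul_nonneg hy1 (stmt7_cert2 x y z hx hy hz)) (by ring)
    have hT_le_s0 : (∏ j ∈ Finset.range m, auxT k d n j) ≤ auxS k n 0 := by
      have h6 := mul_le_mul ht0_le_s0 ht1_le1 ht1_nn (le_of_lt hs0_pos)
      rw [mul_one] at h6
      exact le_trans hT_le h6
    have cE : ((k:ℝ)-(d:ℝ))*(1 - auxS k n 0)^2 ≤
        ((k:ℝ)-(d:ℝ))*((1 - ∏ j ∈ Finset.range m, auxT k d n j)*(1 - auxS k n m)) := by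
      have hh := mul_le_mul
        (show 1 - auxS k n 0 ≤ 1 - (∏ j ∈ Finset.range m, auxT k d n j) by linarith)
        (show 1 - auxS k n 0 ≤ 1 - auxS k n m by linarith)
        (by linarith) (by linarith)
      linarith only [mul_le_mul_of_nonneg_left hh hC0]
    have hcrux : (k:ℝ)*(∏ j ∈ Finset.range m, auxT k d n j)*(auxS k n m - auxT k d n m) ≤
        ((k:ℝ)-(d:ℝ))*((1 - ∏ j ∈ Finset.range m, auxT k d n j)*(1 - auxS k n m)) :=
      le_trans cA (le_trans cB (le_trans cC (le_trans cD cE)))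
    rw [Finset.prod_range_succ, Finset.prod_range_succ]
    have hexp : (k:ℝ)*((∏ j ∈ Finset.range m, auxS k n j)*auxS k n m -
          (∏ j ∈ Finset.range m, auxT k d n j)*auxT k d n m) =
        auxS k n m*((k:ℝ)*((∏ j ∈ Finset.range m, auxS k n j) -
          ∏ j ∈ Finset.range m, auxT k d n j)) +
        (k:ℝ)*(∏ j ∈ Finset.range m, auxT k d n j)*(auxS k n m - auxT k d n m) := by
      ring
    have hmul : auxS k n m*((k:ℝ)*((∏ j ∈ Finset.range m, auxS k n j) -
          ∏ j ∈ Finset.range m, auxT k d n j)) ≤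
        auxS k n m*(((k:ℝ)-(d:ℝ))*(1 - ∏ j ∈ Finset.range m, auxT k d n j)) :=
      mul_le_mul_of_nonneg_left hih (le_of_lt hs_pos)
    have hlast : (0:ℝ) ≤ ((k:ℝ)-(d:ℝ))*(∏ j ∈ Finset.range m, auxT k d n j)*
        (1 - auxT k d n m) :=
      mul_nonneg (mul_nonneg hC0 hT_nn) (by linarith)
    linarith only [hexp, hmul, hcrux, hlast]

set_option maxHeartbeats 1000000 in
theorem stmt_7 (k d i n : ℕ) (hi : 3 ≤ i) (hid : i ≤ d) (hdk : d < k)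
    (hn : 2 * k + 2 * d - 3 ≤ n) :
    (k : ℝ) * ((Nat.descFactorial (k - 1) (i - 1) : ℝ) /
        (Nat.descFactorial (n - k - 1) (i - 1) : ℝ)) -
      (d : ℝ) * (((Nat.descFactorial (d - 1) (i - 1) : ℝ) ^ 2 *
          (Nat.descFactorial (n - k - 1) (i - 1) : ℝ)) /
        ((Nat.descFactorial (n - d - 1) (i - 1) : ℝ) ^ 2 *
          (Nat.descFactorial (k - 1) (i - 1) : ℝ))) ≤ (k : ℝ) - d := by
  have hd : 3 ≤ d := le_trans hi hid
  have hn' : 2*k+2*d ≤ n+3 := by omega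
  have e1 : (Nat.descFactorial (k - 1) (i - 1) : ℝ) =
      ∏ j ∈ Finset.range (i-1), ((k:ℝ) - 1 - (j:ℝ)) := by
    rw [Nat.descFactorial_eq_prod_range, Nat.cast_prod]
    refine Finset.prod_congr rfl fun j hj => ?_
    rw [Finset.mem_range] at hj
    rw [Nat.cast_sub (by omega), Nat.cast_sub (by omega)]
    push_cast
    ring
  have e2 : (Nat.descFactorial (d - 1) (i - 1) : ℝ) =
      ∏ j ∈ Finset.range (i-1), ((d:ℝ) - 1 - (j:ℝ)) := by
    rw [Nat.descFactorial_eq_prod_range, Nat.cast_prod]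
    refine Finset.prod_congr rfl fun j hj => ?_
    rw [Finset.mem_range] at hj
    rw [Nat.cast_sub (by omega), Nat.cast_sub (by omega)]
    push_cast
    ring
  have e3 : (Nat.descFactorial (n - k - 1) (i - 1) : ℝ) =
      ∏ j ∈ Finset.range (i-1), ((n:ℝ) - (k:ℝ) - 1 - (j:ℝ)) := by
    rw [Nat.descFactorial_eq_prod_range, Nat.cast_prod]
    refine Finset.prod_congr rfl fun j hj => ?_
    rw [Finset.mem_range] at hj
    rw [Nat.cast_sub (by omega), Nat.cast_sub (by omega), Nat.cast_sub (by omega)]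
    push_cast
    ring
  have e4 : (Nat.descFactorial (n - d - 1) (i - 1) : ℝ) =
      ∏ j ∈ Finset.range (i-1), ((n:ℝ) - (d:ℝ) - 1 - (j:ℝ)) := by
    rw [Nat.descFactorial_eq_prod_range, Nat.cast_prod]
    refine Finset.prod_congr rfl fun j hj => ?_
    rw [Finset.mem_range] at hj
    rw [Nat.cast_sub (by omega), Nat.cast_sub (by omega), Nat.cast_sub (by omega)]
    push_cast
    ring
  have hS : (Nat.descFactorial (k - 1) (i - 1) : ℝ) /
      (Nat.descFactorial (n - k - 1) (i - 1) : ℝ) =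
      ∏ j ∈ Finset.range (i-1), auxS k n j := by
    rw [e1, e3, ← Finset.prod_div_distrib]
    exact Finset.prod_congr rfl fun j _ => rfl
  have hT : ((Nat.descFactorial (d - 1) (i - 1) : ℝ) ^ 2 *
        (Nat.descFactorial (n - k - 1) (i - 1) : ℝ)) /
      ((Nat.descFactorial (n - d - 1) (i - 1) : ℝ) ^ 2 *
        (Nat.descFactorial (k - 1) (i - 1) : ℝ)) =
      ∏ j ∈ Finset.range (i-1), auxT k d n j := by
    rw [e2, e3, e4, e1, ← Finset.prod_pow, ← Finset.prod_pow, ← Finset.prod_mul_distrib,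
      ← Finset.prod_mul_distrib, ← Finset.prod_div_distrib]
    exact Finset.prod_congr rfl fun j _ => rfl
  rw [hS, hT]
  have hkey := stmt7_key k d n hd hdk hn' (i-1) (by omega) (by omega)
  have hTnn := stmt7_prodT_nonneg k d n hd hdk hn' (i-1) (by omega)
  have hC0 : (0:ℝ) ≤ (k:ℝ)-(d:ℝ) := by
    have h7 : (d:ℝ)+1 ≤ (k:ℝ) := by exact_mod_cast hdk
    linarith
  linarith only [hkey, mul_nonneg hC0 hTnn]
end

section
/- Let k, d integers with k > d ≥ 1 and n > 2k. Set a₁ = -(d/(n-k))·C(n-k,k), a₀ = ((n-d)/(n-k))·C(n-k,k), b₀ = C(k,d)·C(n-d,d)·C(n-d,k-d), b₁ = -C(k-1,d-1)·C(n-d-1,d-1)·C(n-d-1,k-d). Then b₀ - a₀·b₁/a₁ = (n·(k-d)/(k·(n-d)))·b₀. -/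
/-!
We have `a₀ / a₁ = -(n - d) / d`, and each factor of `b₁` is a rational multiple of the
matching factor of `b₀`: `C(k-1,d-1) = (d/k) C(k,d)`, `C(n-d-1,d-1) = (d/(n-d)) C(n-d,d)` and
`C(n-d-1,k-d) = ((n-k)/(n-d)) C(n-d,k-d)`. Hence `a₀ b₁ / a₁ = (d(n-k) / (k(n-d))) b₀`, and
`1 - d(n-k) / (k(n-d)) = n(k-d) / (k(n-d))`.
-/

namespace Nat

variable {K : Type*} [Field K] [CharZero K]

theorem cast_choose_sub_one_sub_one {m j : ℕ} (hm : 0 < m) (hj : 0 < j) :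
    ((m - 1).choose (j - 1) : K) = m.choose j * j / m := by
  have h := add_one_mul_choose_eq (m - 1) (j - 1)
  rw [Nat.sub_add_cancel hm, Nat.sub_add_cancel hj] at h
  rw [eq_div_iff (Nat.cast_ne_zero.mpr hm.ne'), mul_comm]
  exact_mod_cast h

theorem cast_choose_sub_one {m : ℕ} (j : ℕ) (hm : 0 < m) :
    ((m - 1).choose j : K) = m.choose j * ((m : K) - j) / m := by
  rcases le_or_gt j m with hjm | hmj
  · have h := choose_mul_succ_eq (m - 1) j
    rw [Nat.sub_add_cancel hm] at h
    rw [eq_div_iff (Nat.cast_ne_zero.mpr hm.ne'), ← Nat.cast_sub hjm]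
    exact_mod_cast h
  · rw [choose_eq_zero_of_lt hmj, choose_eq_zero_of_lt (by omega)]
    simp

end Nat

theorem stmt_18 (n k d : ℕ) (hd : 1 ≤ d) (hdk : d < k) (hn : 2 * k < n) :
    (Nat.choose k d : ℝ) * (Nat.choose (n - d) d : ℝ) * (Nat.choose (n - d) (k - d) : ℝ) -
        ((((n : ℝ) - d) / ((n : ℝ) - k)) * (Nat.choose (n - k) k : ℝ)) *
          (-((Nat.choose (k - 1) (d - 1) : ℝ) * (Nat.choose (n - d - 1) (d - 1) : ℝ) *
              (Nat.choose (n - d - 1) (k - d) : ℝ))) /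
          (-(((d : ℝ)) / ((n : ℝ) - k)) * (Nat.choose (n - k) k : ℝ)) =
      ((n : ℝ) * ((k : ℝ) - d) / ((k : ℝ) * ((n : ℝ) - d))) *
        ((Nat.choose k d : ℝ) * (Nat.choose (n - d) d : ℝ) * (Nat.choose (n - d) (k - d) : ℝ)) := by
  have hnd_pos : 0 < n - d := by omega
  rw [Nat.cast_choose_sub_one_sub_one (by omega) hd, Nat.cast_choose_sub_one_sub_one hnd_pos hd,
    Nat.cast_choose_sub_one _ hnd_pos, Nat.cast_sub (by omega : d ≤ n),
    Nat.cast_sub hdk.le]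
  have hchoose : (Nat.choose (n - k) k : ℝ) ≠ 0 := by
    exact_mod_cast (Nat.choose_pos (by omega : k ≤ n - k)).ne'
  have hk₀ : (k : ℝ) ≠ 0 := Nat.cast_ne_zero.mpr (by omega)
  have hd₀ : (d : ℝ) ≠ 0 := Nat.cast_ne_zero.mpr (by omega)
  have hnk : (n : ℝ) - k ≠ 0 := sub_ne_zero.mpr (by norm_cast; omega)
  have hnd : (n : ℝ) - d ≠ 0 := sub_ne_zero.mpr (by norm_cast; omega)
  field_simp
  ring
end

section
/- The quadratic inequality n(k-d)/(k(n-d)) · C(k,d)C(n-d,d)C(n-d,k-d) · x²/C(n,k) - (2kn-dk-dn)/(k(n-d)) · C(n-d-1,k-d-1)C(n-d,d)C(k,d) · x + C(n-d-1,k-d-1)²C(n,d)C(n-d,d) > 0 is equivalent, for real x and integers k > d ≥ 1, n ≥ 2k, to (x - C(n-1,k-1))·(x - C(n-d-1,k-d-1)·C(n,d)/C(k,d)) > 0 up to multiplication by a positive constant; in particular the quadratic has roots C(n-1,k-1) and C(n-d-1,k-d-1)·C(n,d)/C(k,d). -/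
/-!
Both roots are rational multiples of `A = C(n,k)`: the absorption identity gives
`C(n-1,k-1) = A k / n` and, combined with `C(n,k) C(k,d) = C(n,d) C(n-d,k-d)`, also
`C(n-d-1,k-d-1) C(n,d) / C(k,d) = A (k-d) / (n-d)`. After these substitutions the factorisation,
with `c` the leading coefficient, is an identity of rational functions in `n, k, d` and
`C(n,k), C(k,d), C(n-d,k-d), C(n-d,d)`.
-/

theorem Nat.mul_choose_sub_one_sub_one {n k : ℕ} (hn : 0 < n) (hk : 0 < k) :
    n * (n - 1).choose (k - 1) = n.choose k * k := by
  obtain ⟨n, rfl⟩ := Nat.exists_eq_add_of_lt hn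
  obtain ⟨k, rfl⟩ := Nat.exists_eq_add_of_lt hk
  simpa [add_comm] using Nat.add_one_mul_choose_eq n k

theorem Nat.cast_choose_sub_one_sub_one_s19 (K : Type*) [Field K] [CharZero K] {n k : ℕ}
    (hn : 0 < n) (hk : 0 < k) : ((n - 1).choose (k - 1) : K) = n.choose k * k / n := by
  rw [eq_div_iff (Nat.cast_ne_zero.mpr hn.ne'), mul_comm]
  exact_mod_cast Nat.mul_choose_sub_one_sub_one hn hk

theorem stmt_19_general (n k d : ℕ) (hdk : d < k) (hn : 2 * k ≤ n) :
    ∃ c : ℝ, 0 < c ∧ ∀ x : ℝ,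
      ((n : ℝ) * ((k : ℝ) - d) / ((k : ℝ) * ((n : ℝ) - d))) *
          ((Nat.choose k d : ℝ) * (Nat.choose (n - d) d : ℝ) *
            (Nat.choose (n - d) (k - d) : ℝ)) * x ^ 2 / (Nat.choose n k : ℝ) -
        ((2 * (k : ℝ) * n - (d : ℝ) * k - (d : ℝ) * n) / ((k : ℝ) * ((n : ℝ) - d))) *
          ((Nat.choose (n - d - 1) (k - d - 1) : ℝ) * (Nat.choose (n - d) d : ℝ) *
            (Nat.choose k d : ℝ)) * x +
        (Nat.choose (n - d - 1) (k - d - 1) : ℝ) ^ 2 * (Nat.choose n d : ℝ) *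
          (Nat.choose (n - d) d : ℝ) =
      c * (x - (Nat.choose (n - 1) (k - 1) : ℝ)) *
        (x - (Nat.choose (n - d - 1) (k - d - 1) : ℝ) * (Nat.choose n d : ℝ) /
          (Nat.choose k d : ℝ)) := by
  have hkn : k ≤ n := by omega
  have hdn : d < n := by omega
  have hA : 0 < (n.choose k : ℝ) := by exact_mod_cast Nat.choose_pos hkn
  have hB : 0 < (k.choose d : ℝ) := by exact_mod_cast Nat.choose_pos hdk.le
  have hC : 0 < ((n - d).choose (k - d) : ℝ) := by exact_mod_cast Nat.choose_pos (by omega)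
  have hD : 0 < ((n - d).choose d : ℝ) := by exact_mod_cast Nat.choose_pos (by omega)
  have hkd : (0 : ℝ) < k - d := sub_pos.mpr (by exact_mod_cast hdk)
  have hnd : (0 : ℝ) < n - d := sub_pos.mpr (by exact_mod_cast hdn)
  have hk0 : (0 : ℝ) < k := by exact_mod_cast (by omega : 0 < k)
  have hn0 : (0 : ℝ) < n := by exact_mod_cast (by omega : 0 < n)
  have hchoose_pred : ((n - 1).choose (k - 1) : ℝ) = n.choose k * k / n :=
    Nat.cast_choose_sub_one_sub_one_s19 ℝ (by omega) (by omega)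
  have hchoose_pred_sub :
      ((n - d - 1).choose (k - d - 1) : ℝ) = (n - d).choose (k - d) * (k - d) / (n - d) := by
    rw [← Nat.cast_sub hdn.le, ← Nat.cast_sub hdk.le]
    exact Nat.cast_choose_sub_one_sub_one_s19 ℝ (by omega) (by omega)
  have hchoose_n_d : (n.choose d : ℝ) = n.choose k * k.choose d / (n - d).choose (k - d) := by
    rw [eq_div_iff hC.ne']
    exact_mod_cast (Nat.choose_mul hdk.le).symm
  refine ⟨n * (k - d) / (k * (n - d)) * (k.choose d * (n - d).choose d * (n - d).choose (k - d))
    / n.choose k, by positivity, fun x => ?_⟩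
  rw [hchoose_pred, hchoose_pred_sub, hchoose_n_d]
  field_simp
  ring

theorem stmt_19 (n k d : ℕ) (hd : 1 ≤ d) (hdk : d < k) (hn : 2 * k ≤ n) :
    ∃ c : ℝ, 0 < c ∧ ∀ x : ℝ,
      ((n : ℝ) * ((k : ℝ) - d) / ((k : ℝ) * ((n : ℝ) - d))) *
          ((Nat.choose k d : ℝ) * (Nat.choose (n - d) d : ℝ) *
            (Nat.choose (n - d) (k - d) : ℝ)) * x ^ 2 / (Nat.choose n k : ℝ) -
        ((2 * (k : ℝ) * n - (d : ℝ) * k - (d : ℝ) * n) / ((k : ℝ) * ((n : ℝ) - d))) *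
          ((Nat.choose (n - d - 1) (k - d - 1) : ℝ) * (Nat.choose (n - d) d : ℝ) *
            (Nat.choose k d : ℝ)) * x +
        (Nat.choose (n - d - 1) (k - d - 1) : ℝ) ^ 2 * (Nat.choose n d : ℝ) *
          (Nat.choose (n - d) d : ℝ) =
      c * (x - (Nat.choose (n - 1) (k - 1) : ℝ)) *
        (x - (Nat.choose (n - d - 1) (k - d - 1) : ℝ) * (Nat.choose n d : ℝ) /
          (Nat.choose k d : ℝ)) :=
  stmt_19_general n k d hdk hn
end
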